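/- For the unweighted 1-D fused lasso (all weights equal to 1) with input y ∈ ℝⁿ, the solution path γ ↦ x*(γ) has at most n distinct linear segments. -/

import Mathlib

/-!
The minimizer `x(γ)` is characterized by its KKT conditions, with the partial sums
`s_t = ∑_{i<t} (x_i - y_i)` as dual variable: `s_{n+1} = 0`, `|s_t| ≤ γ`, and `s_{t+1} = ±γ`
wherever `x` jumps up/down between `t` and `t+1`. Solving again with penalty `γ' - γ` on the
output `x(γ)` yields `x(γ')`; as the dual variable of that second problem sits at its bound at every
jump, each jump of `x(γ')` is a jump of `x(γ)` in the same direction. So a fused pair stays fused,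
the set of `γ` fusing the pair `t, t+1` is an upper set with infimum `λ_t`, and between
consecutive points of `{0} ∪ {λ_t}` the jump signs are constant. There convex combinations of
solutions satisfy the KKT conditions, so by uniqueness `x` is affine, and by continuity of
`γ ↦ x(γ)` it stays affine up to the endpoints.
-/

/-- Objective of the (unweighted) 1-D fused lasso on an input of size `n+1`. -/
noncomputable def fusedObj1 (n : ℕ) (y : Fin (n + 1) → ℝ) (γ : ℝ)
    (x : Fin (n + 1) → ℝ) : ℝ :=
  (1 / 2) * ∑ t, (x t - y t) ^ 2 + γ * ∑ t : Fin n, |x t.succ - x t.castSucc|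

open Finset Filter Topology
open scoped fwdDiff
open SignType (sign)

theorem nonneg_of_forall_mul_add_sq_nonneg {a C r : ℝ} (hr : 0 < r)
    (h : ∀ ε, 0 < ε → ε < r → 0 ≤ ε * a + C * ε ^ 2) : 0 ≤ a := by
  have hlim : Tendsto (fun ε => a + C * ε) (𝓝[>] 0) (𝓝 a) := by
    have : Continuous fun ε : ℝ => a + C * ε := by fun_prop
    simpa using (this.tendsto 0).mono_left nhdsWithin_le_nhds
  refine ge_of_tendsto hlim ?_
  filter_upwards [Ioo_mem_nhdsGT hr] with ε ⟨hε, hεr⟩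
  have := h ε hε hεr
  nlinarith

theorem first_order_conditions_of_forall_nonneg {S C γ d : ℝ} (hγ : 0 ≤ γ)
    (h : ∀ ε, 0 ≤ ε * S + C * ε ^ 2 + γ * (|d - ε| - |d|)) :
    |S| ≤ γ ∧ (0 < d → S = γ) ∧ (d < 0 → S = -γ) := by
  have hup : 0 ≤ S + γ := nonneg_of_forall_mul_add_sq_nonneg (C := C) one_pos fun ε hε _ => by
    have := h ε
    have : |d - ε| - |d| ≤ ε := by linarith [abs_sub d ε, abs_of_pos hε]
    nlinarith
  have hdown : 0 ≤ γ - S := nonneg_of_forall_mul_add_sq_nonneg (C := C) one_pos fun ε hε _ => by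
    have := h (-ε)
    have : |d - -ε| - |d| ≤ ε := by rw [sub_neg_eq_add]; linarith [abs_add_le d ε, abs_of_pos hε]
    nlinarith
  refine ⟨abs_le.2 ⟨by linarith, by linarith⟩, fun hd => ?_, fun hd => ?_⟩
  · have : 0 ≤ S - γ := nonneg_of_forall_mul_add_sq_nonneg (C := C) hd fun ε hε hεd => by
      have := h ε
      rw [abs_of_pos hd, abs_of_pos (by linarith : 0 < d - ε)] at this
      nlinarith
    linarith
  · have : 0 ≤ -S - γ := nonneg_of_forall_mul_add_sq_nonneg (C := C) (neg_pos.2 hd)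
      fun ε hε hεd => by
      have := h (-ε)
      rw [abs_of_neg hd, abs_of_neg (by linarith : d - -ε < 0)] at this
      nlinarith
    linarith

theorem IsUpperSet.le_csInf_of_notMem {α : Type*} [ConditionallyCompleteLinearOrder α]
    {s : Set α} (hs : IsUpperSet s) (hbdd : BddBelow s) {a b : α} (ha : a ∉ s) (hb : b ∈ s) :
    a ≤ sInf s := by
  by_contra! h
  obtain ⟨c, hc, hca⟩ := (csInf_lt_iff hbdd ⟨b, hb⟩).1 h
  exact ha (hs hca.le hc)

def IsAffineOn {E : Type*} [AddCommGroup E] [Module ℝ E] (f : ℝ → E) (s : Set ℝ) : Prop :=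
  ∃ a b : E, ∀ γ ∈ s, f γ = a + γ • b

section IsAffineOn

open Set

variable {E : Type*} [AddCommGroup E] [Module ℝ E] {f : ℝ → E}

/-- The affine representation on `[p, q] ⊆ [min p γ, max q γ]` pins down the coefficients. -/
theorem isAffineOn_of_forall_Icc {I : Set ℝ} (hI : I.OrdConnected)
    (h : ∀ p ∈ I, ∀ q ∈ I, p < q → IsAffineOn f (Icc p q)) : IsAffineOn f I := by
  rcases I.subsingleton_or_nontrivial with hsub | hnt
  · rcases hsub.eq_empty_or_singleton with rfl | ⟨p, rfl⟩
    · exact ⟨0, 0, by simp⟩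
    · exact ⟨f p, 0, by simp⟩
  obtain ⟨p, hp, q, hq, hpq⟩ := hnt
  wlog hlt : p < q generalizing p q
  · exact this q hq p hp hpq.symm (hpq.lt_or_gt.resolve_left hlt)
  obtain ⟨a, b, hab⟩ := h p hp q hq hlt
  refine ⟨a, b, fun γ hγ => ?_⟩
  have hlo : min p γ ∈ I := by rcases min_choice p γ with h | h <;> rw [h] <;> assumption
  have hhi : max q γ ∈ I := by rcases max_choice q γ with h | h <;> rw [h] <;> assumption
  obtain ⟨a', b', hab'⟩ := h _ hlo _ hhi (by
    exact (min_le_left p γ).trans_lt (hlt.trans_le (le_max_left q γ)))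
  have hmem : ∀ r, p ≤ r → r ≤ q → r ∈ Icc (min p γ) (max q γ) := fun r h₁ h₂ =>
    ⟨(min_le_left _ _).trans h₁, h₂.trans (le_max_left _ _)⟩
  have hp' := (hab p ⟨le_rfl, hlt.le⟩).symm.trans (hab' p (hmem p le_rfl hlt.le))
  have hq' := (hab q ⟨hlt.le, le_rfl⟩).symm.trans (hab' q (hmem q hlt.le le_rfl))
  have hb : b' = b := by
    have : (q - p) • (b' - b) = 0 := by linear_combination (norm := module) hp' - hq'
    rw [smul_eq_zero] at this
    exact sub_eq_zero.1 (this.resolve_left (sub_ne_zero.2 hlt.ne'))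
  have ha : a' = a := by
    subst hb
    linear_combination (norm := module) -hp'
  rw [hab' γ ⟨min_le_right _ _, le_max_right _ _⟩, ha, hb]

theorem IsAffineOn.closure [TopologicalSpace E] [T2Space E] [ContinuousAdd E]
    [ContinuousSMul ℝ E] {s : Set ℝ} (h : IsAffineOn f s) (hf : ContinuousOn f (closure s)) :
    IsAffineOn f (closure s) := by
  obtain ⟨a, b, hab⟩ := h
  exact ⟨a, b, Set.EqOn.of_subset_closure hab hf (by fun_prop) subset_closure subset_rfl⟩

end IsAffineOn

theorem Finset.exists_strictMono_enum {α : Type*} [LinearOrder α] (s : Finset α) {a : α}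
    (ha : a ∈ s) (hmin : ∀ b ∈ s, a ≤ b) :
    ∃ (k : ℕ) (c : Fin (k + 1) → α), k + 1 = s.card ∧ c 0 = a ∧ StrictMono c ∧
      ∀ b ∈ s, ∃ j, c j = b := by
  have hcard : s.card = s.card - 1 + 1 := (Nat.succ_pred_eq_of_pos (card_pos.2 ⟨a, ha⟩)).symm
  refine ⟨s.card - 1, s.orderEmbOfFin hcard, hcard.symm, ?_, (s.orderEmbOfFin hcard).strictMono,
    fun b hb => ?_⟩
  · rw [Fin.zero_eta.symm, Finset.orderEmbOfFin_zero hcard (Nat.succ_pos _)]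
    exact le_antisymm (s.min'_le a ha) (s.le_min' _ _ hmin)
  · rw [← Finset.mem_coe, ← Finset.range_orderEmbOfFin s hcard] at hb
    exact hb

theorem StrictMono.apply_notMem_Ioo {α : Type*} [Preorder α] {k : ℕ} {c : Fin (k + 1) → α}
    (hc : StrictMono c) (i : Fin k) (j : Fin (k + 1)) :
    c j ∉ Set.Ioo (c i.castSucc) (c i.succ) := by
  rintro ⟨h₁, h₂⟩
  have := Fin.castSucc_lt_iff_succ_le.1 (hc.lt_iff_lt.1 h₁)
  exact absurd (hc.lt_iff_lt.1 h₂) (not_lt.2 this)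

theorem exists_forall_fusedObj1_le (n : ℕ) (y : Fin (n + 1) → ℝ) {γ : ℝ} (hγ : 0 ≤ γ) :
    ∃ z, ∀ v, fusedObj1 n y γ z ≤ fusedObj1 n y γ v := by
  refine (by unfold fusedObj1; fun_prop : Continuous (fusedObj1 n y γ)).exists_forall_le ?_
  have hcoer : ∀ v, ‖v - y‖ ^ 2 / 2 ≤ fusedObj1 n y γ v := fun v => by
    have hnorm : ‖v - y‖ ≤ √(∑ t, (v t - y t) ^ 2) :=
      (pi_norm_le_iff_of_nonneg (Real.sqrt_nonneg _)).2 fun t => Real.abs_le_sqrt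
        (single_le_sum (f := fun t => (v t - y t) ^ 2) (fun _ _ => sq_nonneg _) (mem_univ t))
    have hsq := pow_le_pow_left₀ (norm_nonneg _) hnorm 2
    rw [Real.sq_sqrt (sum_nonneg fun _ _ => sq_nonneg _)] at hsq
    have : 0 ≤ γ * ∑ t : Fin n, |v t.succ - v t.castSucc| :=
      mul_nonneg hγ (sum_nonneg fun _ _ => abs_nonneg _)
    unfold fusedObj1
    linarith
  refine tendsto_atTop_mono hcoer ?_
  have hnorm : Tendsto (fun v => ‖v - y‖) (cocompact (Fin (n + 1) → ℝ)) atTop :=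
    tendsto_norm_cocompact_atTop.comp (Homeomorph.subRight y).isClosedEmbedding.tendsto_cocompact
  exact (tendsto_pow_atTop two_ne_zero).comp hnorm |>.atTop_div_const two_pos

namespace FusedLasso

noncomputable def sqDist (n : ℕ) (u v : ℕ → ℝ) : ℝ := ∑ i ∈ range (n + 1), (v i - u i) ^ 2

noncomputable def totalVar (n : ℕ) (v : ℕ → ℝ) : ℝ := ∑ t ∈ range n, |Δ_[1] v t|

noncomputable def objective (n : ℕ) (y : ℕ → ℝ) (γ : ℝ) (v : ℕ → ℝ) : ℝ :=
  1 / 2 * sqDist n y v + γ * totalVar n v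

def IsMinimizer (n : ℕ) (y : ℕ → ℝ) (γ : ℝ) (x : ℕ → ℝ) : Prop :=
  ∀ v, objective n y γ x ≤ objective n y γ v

noncomputable def resid (y x : ℕ → ℝ) (t : ℕ) : ℝ := ∑ i ∈ range t, (x i - y i)

/-- The partial sum `resid y x t` of the residual is the dual variable; `resid y x (t + 1)` is
paired with the jump `Δ_[1] x t`. -/
structure IsKKT (n : ℕ) (y : ℕ → ℝ) (γ : ℝ) (x : ℕ → ℝ) : Prop where
  resid_last : resid y x (n + 1) = 0
  abs_resid_le : ∀ t ≤ n + 1, |resid y x t| ≤ γ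
  resid_of_pos : ∀ t < n, 0 < Δ_[1] x t → resid y x (t + 1) = γ
  resid_of_neg : ∀ t < n, Δ_[1] x t < 0 → resid y x (t + 1) = -γ

section Sequences

variable {n : ℕ} {y x : ℕ → ℝ} {γ : ℝ}

theorem sqDist_nonneg (u v : ℕ → ℝ) : 0 ≤ sqDist n u v :=
  sum_nonneg fun _ _ => sq_nonneg _

theorem sqDist_comm (u v : ℕ → ℝ) : sqDist n u v = sqDist n v u :=
  sum_congr rfl fun _ _ => by ring

theorem sq_sub_le_sqDist (u v : ℕ → ℝ) {i : ℕ} (hi : i ≤ n) : (v i - u i) ^ 2 ≤ sqDist n u v :=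
  single_le_sum (f := fun i => (v i - u i) ^ 2) (fun _ _ => sq_nonneg _)
    (mem_range.2 (Nat.lt_succ_of_le hi))

theorem resid_succ (y x : ℕ → ℝ) (t : ℕ) : resid y x (t + 1) = resid y x t + (x t - y t) :=
  sum_range_succ _ _

theorem resid_add (y x z : ℕ → ℝ) (t : ℕ) : resid y z t = resid y x t + resid x z t := by
  rw [resid, resid, resid, ← sum_add_distrib]
  exact sum_congr rfl fun _ _ => by ring

theorem sum_mul_eq_neg_sum_resid_mul (h : resid y x (n + 1) = 0) (w : ℕ → ℝ) :
    ∑ i ∈ range (n + 1), (x i - y i) * w i = -∑ t ∈ range n, resid y x (t + 1) * Δ_[1] w t := by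
  have := sum_range_by_parts w (fun i => x i - y i) (n + 1)
  simp only [smul_eq_mul, Nat.add_sub_cancel] at this
  rw [sum_congr rfl fun i _ => mul_comm _ _, this, ← resid, h, mul_zero, zero_sub]
  exact congrArg _ (sum_congr rfl fun t _ => by simp only [resid, fwdDiff]; ring)

theorem IsKKT.resid_mul_fwdDiff (h : IsKKT n y γ x) {t : ℕ} (ht : t < n) :
    resid y x (t + 1) * Δ_[1] x t = γ * |Δ_[1] x t| := by
  rcases lt_trichotomy (Δ_[1] x t) 0 with hd | hd | hd
  · rw [h.resid_of_neg t ht hd, abs_of_neg hd]; ring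
  · rw [hd]; simp
  · rw [h.resid_of_pos t ht hd, abs_of_pos hd]

/-- Summation by parts turns the first-order term into `∑ resid (t+1) * Δ (v - x) t`, which the
conditions bound by `γ * (totalVar v - totalVar x)`. -/
theorem IsKKT.objective_add_le (h : IsKKT n y γ x) (v : ℕ → ℝ) :
    objective n y γ x + 1 / 2 * sqDist n x v ≤ objective n y γ v := by
  have hsq : sqDist n y v = sqDist n y x + sqDist n x v
      + 2 * ∑ i ∈ range (n + 1), (x i - y i) * (v i - x i) := by
    simp only [sqDist, mul_sum, ← sum_add_distrib]
    exact sum_congr rfl fun i _ => by ring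
  have hterm : ∀ t ∈ range n, resid y x (t + 1) * Δ_[1] (v - x) t
      ≤ γ * |Δ_[1] v t| - γ * |Δ_[1] x t| := fun t ht => by
    have hS := h.abs_resid_le (t + 1) (by simp at ht; omega)
    have hv : resid y x (t + 1) * Δ_[1] v t ≤ γ * |Δ_[1] v t| := by
      calc _ ≤ |resid y x (t + 1) * Δ_[1] v t| := le_abs_self _
        _ = |resid y x (t + 1)| * |Δ_[1] v t| := abs_mul _ _
        _ ≤ γ * |Δ_[1] v t| := mul_le_mul_of_nonneg_right hS (abs_nonneg _)
    have hsub : Δ_[1] (v - x) t = Δ_[1] v t - Δ_[1] x t := by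
      simp only [fwdDiff, Pi.sub_apply]; ring
    rw [hsub, mul_sub, h.resid_mul_fwdDiff (mem_range.1 ht)]
    linarith
  have hlin := sum_mul_eq_neg_sum_resid_mul h.resid_last (v - x)
  simp only [Pi.sub_apply] at hlin
  have := sum_le_sum hterm
  rw [sum_sub_distrib, ← mul_sum, ← mul_sum] at this
  simp only [objective, totalVar]
  linarith

theorem IsKKT.isMinimizer (h : IsKKT n y γ x) : IsMinimizer n y γ x := fun v => by
  linarith [h.objective_add_le v, sqDist_nonneg (n := n) x v]

theorem IsKKT.eq_of_isMinimizer (h : IsKKT n y γ x) {x' : ℕ → ℝ} (h' : IsMinimizer n y γ x')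
    {i : ℕ} (hi : i ≤ n) : x' i = x i := by
  have hle : sqDist n x x' ≤ 0 := by linarith [h.objective_add_le x', h' x]
  have := (sq_sub_le_sqDist x x' hi).trans hle
  nlinarith [sq_nonneg (x' i - x i)]

def step (t : ℕ) (ε : ℝ) : ℕ → ℝ := fun i => if i ≤ t then ε else 0

theorem fwdDiff_step (t : ℕ) (ε : ℝ) (s : ℕ) : Δ_[1] (step t ε) s = if s = t then -ε else 0 := by
  simp only [fwdDiff, step]
  split_ifs <;> first | (exfalso; omega) | ring

theorem totalVar_add_step (x : ℕ → ℝ) (t : ℕ) (ε : ℝ) :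
    totalVar n (x + step t ε)
      = totalVar n x + if t < n then |Δ_[1] x t - ε| - |Δ_[1] x t| else 0 := by
  have hterm : ∀ s, |Δ_[1] (x + step t ε) s|
      = |Δ_[1] x s| + if s = t then |Δ_[1] x t - ε| - |Δ_[1] x t| else 0 := fun s => by
    rw [fwdDiff_add, Pi.add_apply, fwdDiff_step]
    split_ifs with hs
    · subst hs; ring_nf
    · simp
  simp only [totalVar, hterm, sum_add_distrib, sum_ite_eq', mem_range]

theorem sqDist_add_step (x : ℕ → ℝ) {t : ℕ} (ht : t ≤ n) (ε : ℝ) :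
    sqDist n y (x + step t ε) = sqDist n y x + 2 * ε * resid y x (t + 1) + (t + 1) * ε ^ 2 := by
  have hsplit : ∀ v : ℕ → ℝ, sqDist n y v
      = ∑ i ∈ range (t + 1), (v i - y i) ^ 2 + ∑ i ∈ Ico (t + 1) (n + 1), (v i - y i) ^ 2 :=
    fun v => (sum_range_add_sum_Ico _ (by omega)).symm
  have hlow : ∀ i ∈ range (t + 1), ((x + step t ε) i - y i) ^ 2
      = (x i - y i) ^ 2 + 2 * ε * (x i - y i) + ε ^ 2 := fun i hi => by
    simp only [Pi.add_apply, step, if_pos (Nat.lt_succ_iff.1 (mem_range.1 hi))]; ring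
  have hhigh : ∀ i ∈ Ico (t + 1) (n + 1), ((x + step t ε) i - y i) ^ 2 = (x i - y i) ^ 2 :=
    fun i hi => by
      simp only [Pi.add_apply, step, if_neg (show ¬i ≤ t by simp at hi; omega), add_zero]
  rw [hsplit, hsplit x, sum_congr rfl hlow, sum_congr rfl hhigh, sum_add_distrib, sum_add_distrib,
    ← mul_sum, sum_const, card_range, resid]
  simp only [nsmul_eq_mul, Nat.cast_add, Nat.cast_one]
  ring

theorem IsMinimizer.isKKT (hγ : 0 ≤ γ) (h : IsMinimizer n y γ x) : IsKKT n y γ x := by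
  -- Shifting `x` by `ε` on `[0, t]` moves only the jump at `t`.
  have key : ∀ t ≤ n, ∀ ε, 0 ≤ ε * resid y x (t + 1) + (t + 1) / 2 * ε ^ 2
      + γ * (if t < n then |Δ_[1] x t - ε| - |Δ_[1] x t| else 0) := fun t ht ε => by
    have := h (x + step t ε)
    rw [objective, objective, sqDist_add_step x ht, totalVar_add_step] at this
    linarith
  have hlast : resid y x (n + 1) = 0 := by
    have := first_order_conditions_of_forall_nonneg (d := 0) le_rfl fun ε => by
      simpa using key n le_rfl ε
    exact abs_nonpos_iff.1 this.1
  have hinner : ∀ t < n, |resid y x (t + 1)| ≤ γ ∧ (0 < Δ_[1] x t → resid y x (t + 1) = γ)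
      ∧ (Δ_[1] x t < 0 → resid y x (t + 1) = -γ) := fun t ht =>
    first_order_conditions_of_forall_nonneg hγ fun ε => by simpa [ht] using key t ht.le ε
  refine ⟨hlast, fun t ht => ?_, fun t ht => (hinner t ht).2.1, fun t ht => (hinner t ht).2.2⟩
  rcases t with _ | s
  · simpa [resid] using hγ
  rcases (Nat.lt_or_eq_of_le (Nat.le_of_succ_le_succ ht)) with hs | rfl
  · exact (hinner s hs).1
  · simpa [hlast] using hγ

theorem fusedObj1_eq_objective (y v : ℕ → ℝ) :
    fusedObj1 n (fun i => y i) γ (fun i => v i) = objective n y γ v := by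
  simp only [fusedObj1, objective, sqDist, totalVar, Fin.val_succ, Fin.val_castSucc]
  rw [Fin.sum_univ_eq_sum_range (fun i => (v i - y i) ^ 2),
    Fin.sum_univ_eq_sum_range (fun t => |v (t + 1) - v t|)]
  rfl

noncomputable def zeroExtend (v : Fin (n + 1) → ℝ) : ℕ → ℝ := Function.extend Fin.val v 0

@[simp]
theorem zeroExtend_val (v : Fin (n + 1) → ℝ) (i : Fin (n + 1)) : zeroExtend v i = v i :=
  Fin.val_injective.extend_apply _ _ _

theorem fwdDiff_zeroExtend (v : Fin (n + 1) → ℝ) (t : Fin n) :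
    Δ_[1] (zeroExtend v) t = v t.succ - v t.castSucc := by
  rw [fwdDiff, show (t : ℕ) + 1 = (t.succ : ℕ) from rfl, show (t : ℕ) = (t.castSucc : ℕ) from rfl,
    zeroExtend_val, zeroExtend_val]

theorem isMinimizer_zeroExtend {y x : Fin (n + 1) → ℝ}
    (h : ∀ v, fusedObj1 n y γ x ≤ fusedObj1 n y γ v) :
    IsMinimizer n (zeroExtend y) γ (zeroExtend x) := fun v => by
  rw [← fusedObj1_eq_objective, ← fusedObj1_eq_objective]
  simpa using h _

theorem exists_isMinimizer (y : ℕ → ℝ) (hγ : 0 ≤ γ) : ∃ x, IsMinimizer n y γ x := by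
  obtain ⟨z, hz⟩ := exists_forall_fusedObj1_le n (fun i => y i) hγ
  exact ⟨zeroExtend z, fun v => by
    rw [← fusedObj1_eq_objective, ← fusedObj1_eq_objective]
    simpa using hz _⟩

theorem IsKKT.neg (h : IsKKT n y γ x) : IsKKT n (-y) γ (-x) := by
  have hr : ∀ t, resid (-y) (-x) t = -resid y x t := fun t => by
    simp only [resid, Pi.neg_apply, ← sum_neg_distrib]
    exact sum_congr rfl fun _ _ => by ring
  have hd : ∀ t, Δ_[1] (-x) t = -Δ_[1] x t := fun t => by
    simp only [fwdDiff, Pi.neg_apply]; ring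
  refine ⟨by rw [hr, h.resid_last, neg_zero], fun t ht => ?_, fun t ht hpos => ?_,
    fun t ht hneg => ?_⟩
  · rw [hr, abs_neg]
    exact h.abs_resid_le t ht
  · rw [hr, h.resid_of_neg t ht (by linarith [hd t]), neg_neg]
  · rw [hr, h.resid_of_pos t ht (by linarith [hd t])]

variable {z : ℕ → ℝ} {δ : ℝ}

/-- At the jump the dual variable is at its bound `δ`, so the residual `z - x` is `≥ 0` just left
of it and `≤ 0` just right of it. -/
theorem IsKKT.fwdDiff_le_of_pos (hz : IsKKT n x δ z) {t : ℕ} (ht : t < n)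
    (hpos : 0 < Δ_[1] z t) : Δ_[1] z t ≤ Δ_[1] x t := by
  have hS := hz.resid_of_pos t ht hpos
  have hleft := (abs_le.1 (hz.abs_resid_le t (by omega))).2
  have hright := (abs_le.1 (hz.abs_resid_le (t + 2) (by omega))).2
  have e₁ := resid_succ x z t
  have e₂ := resid_succ x z (t + 1)
  simp only [fwdDiff]
  linarith

theorem IsKKT.fwdDiff_le_of_neg (hz : IsKKT n x δ z) {t : ℕ} (ht : t < n)
    (hneg : Δ_[1] z t < 0) : Δ_[1] x t ≤ Δ_[1] z t := by
  have := hz.neg.fwdDiff_le_of_pos ht (by simp only [fwdDiff, Pi.neg_apply] at hneg ⊢; linarith)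
  simp only [fwdDiff, Pi.neg_apply] at this ⊢
  linarith

theorem IsKKT.trans (hx : IsKKT n y γ x) (hz : IsKKT n x δ z) : IsKKT n y (γ + δ) z where
  resid_last := by rw [resid_add y x z, hx.resid_last, hz.resid_last, add_zero]
  abs_resid_le t ht := by
    rw [resid_add y x z]
    exact (abs_add_le _ _).trans (add_le_add (hx.abs_resid_le t ht) (hz.abs_resid_le t ht))
  resid_of_pos t ht hpos := by
    rw [resid_add y x z, hz.resid_of_pos t ht hpos,
      hx.resid_of_pos t ht (hpos.trans_le (hz.fwdDiff_le_of_pos ht hpos))]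
  resid_of_neg t ht hneg := by
    rw [resid_add y x z, hz.resid_of_neg t ht hneg,
      hx.resid_of_neg t ht ((hz.fwdDiff_le_of_neg ht hneg).trans_lt hneg), neg_add]

/-- The solution at `γ'` also solves the problem with input `x` and penalty `γ' - γ`. -/
theorem IsKKT.sign_fwdDiff_eq_of_le {x' : ℕ → ℝ} {γ' : ℝ} (hx : IsKKT n y γ x)
    (hx' : IsKKT n y γ' x') (hle : γ ≤ γ') {t : ℕ} (ht : t < n) (hjump : Δ_[1] x' t ≠ 0) :
    sign (Δ_[1] x t) = sign (Δ_[1] x' t) := by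
  obtain ⟨z, hz⟩ := exists_isMinimizer (n := n) x (sub_nonneg.2 hle)
  have hzk := hz.isKKT (sub_nonneg.2 hle)
  have hzx' : Δ_[1] z t = Δ_[1] x' t := by
    have hyz := hx.trans hzk
    rw [add_sub_cancel] at hyz
    simp only [fwdDiff]
    rw [hx'.eq_of_isMinimizer hyz.isMinimizer (by omega : t + 1 ≤ n),
      hx'.eq_of_isMinimizer hyz.isMinimizer ht.le]
  rw [← hzx'] at hjump ⊢
  rcases hjump.lt_or_gt with hneg | hpos
  · rw [sign_neg hneg, sign_neg ((hzk.fwdDiff_le_of_neg ht hneg).trans_lt hneg)]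
  · rw [sign_pos hpos, sign_pos (hpos.trans_le (hzk.fwdDiff_le_of_pos ht hpos))]

theorem IsKKT.convex_combination {x₁ x₂ : ℕ → ℝ} {γ₁ γ₂ a b : ℝ} (h₁ : IsKKT n y γ₁ x₁)
    (h₂ : IsKKT n y γ₂ x₂)
    (hsign : ∀ t < n, sign (Δ_[1] x₁ t) = sign (Δ_[1] x₂ t))
    (ha : 0 ≤ a) (hb : 0 ≤ b) (hab : a + b = 1) :
    IsKKT n y (a * γ₁ + b * γ₂) (a • x₁ + b • x₂) := by
  have hr : ∀ t, resid y (a • x₁ + b • x₂) t = a * resid y x₁ t + b * resid y x₂ t := fun t => by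
    simp only [resid, mul_sum, ← sum_add_distrib, Pi.add_apply, Pi.smul_apply, smul_eq_mul]
    exact sum_congr rfl fun i _ => by linear_combination (y i) * hab
  have hd : ∀ t, Δ_[1] (a • x₁ + b • x₂) t = a * Δ_[1] x₁ t + b * Δ_[1] x₂ t := fun t => by
    simp
  have hpos : ∀ t < n, (0 < Δ_[1] x₁ t ↔ 0 < Δ_[1] x₂ t) := fun t ht => by
    rw [← sign_eq_one_iff, ← sign_eq_one_iff, hsign t ht]
  have hneg : ∀ t < n, (Δ_[1] x₁ t < 0 ↔ Δ_[1] x₂ t < 0) := fun t ht => by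
    rw [← sign_eq_neg_one_iff, ← sign_eq_neg_one_iff, hsign t ht]
  refine ⟨by rw [hr, h₁.resid_last, h₂.resid_last]; ring, fun t ht => ?_, fun t ht h => ?_,
    fun t ht h => ?_⟩
  · rw [hr]
    calc |a * resid y x₁ t + b * resid y x₂ t|
        ≤ a * |resid y x₁ t| + b * |resid y x₂ t| := by
          refine (abs_add_le _ _).trans ?_
          rw [abs_mul, abs_mul, abs_of_nonneg ha, abs_of_nonneg hb]
      _ ≤ a * γ₁ + b * γ₂ := by
          gcongr
          exacts [h₁.abs_resid_le t ht, h₂.abs_resid_le t ht]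
  · rw [hd] at h
    have h₁pos : 0 < Δ_[1] x₁ t := by
      by_contra! h₁le
      nlinarith [(hpos t ht).not.1 h₁le.not_gt]
    rw [hr, h₁.resid_of_pos t ht h₁pos, h₂.resid_of_pos t ht ((hpos t ht).1 h₁pos)]
  · rw [hd] at h
    have h₁neg : Δ_[1] x₁ t < 0 := by
      by_contra! h₁ge
      nlinarith [(hneg t ht).not.1 h₁ge.not_gt]
    rw [hr, h₁.resid_of_neg t ht h₁neg, h₂.resid_of_neg t ht ((hneg t ht).1 h₁neg)]
    ring

theorem IsKKT.sqDist_le {x' : ℕ → ℝ} {γ' : ℝ} (hx : IsKKT n y γ x) (hx' : IsKKT n y γ' x') :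
    sqDist n x x' ≤ (γ' - γ) * (totalVar n x - totalVar n x') := by
  have h₁ := hx.objective_add_le x'
  have h₂ := hx'.objective_add_le x
  rw [sqDist_comm] at h₂
  simp only [objective] at h₁ h₂
  linarith

end Sequences

open Set

def IsSolutionPath (n : ℕ) (y : Fin (n + 1) → ℝ) (x : ℝ → Fin (n + 1) → ℝ) : Prop :=
  ∀ γ, 0 ≤ γ → ∀ v, fusedObj1 n y γ (x γ) ≤ fusedObj1 n y γ v

def fusionSet {n : ℕ} (x : ℝ → Fin (n + 1) → ℝ) (t : Fin n) : Set ℝ :=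
  {γ | 0 ≤ γ ∧ x γ t.succ = x γ t.castSucc}

noncomputable def breakpoints {n : ℕ} (x : ℝ → Fin (n + 1) → ℝ) : Finset ℝ :=
  insert 0 (univ.image fun t => sInf (fusionSet x t))

section Paths

variable {n : ℕ} {y : Fin (n + 1) → ℝ} {x : ℝ → Fin (n + 1) → ℝ} {γ γ' : ℝ}

theorem card_breakpoints_le : (breakpoints x).card ≤ n + 1 :=
  (card_insert_le _ _).trans (Nat.succ_le_succ (card_image_le.trans_eq (card_fin n)))

theorem zero_mem_breakpoints : 0 ∈ breakpoints x := mem_insert_self _ _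

theorem nonneg_of_mem_breakpoints {c : ℝ} (hc : c ∈ breakpoints x) : 0 ≤ c := by
  rcases mem_insert.1 hc with rfl | hc
  · exact le_rfl
  · obtain ⟨t, _, rfl⟩ := mem_image.1 hc
    exact Real.sInf_nonneg fun _ hγ => hγ.1

namespace IsSolutionPath

theorem isKKT (hx : IsSolutionPath n y x) (hγ : 0 ≤ γ) :
    IsKKT n (zeroExtend y) γ (zeroExtend (x γ)) :=
  (isMinimizer_zeroExtend (hx γ hγ)).isKKT hγ

theorem sign_jump_eq_of_le (hx : IsSolutionPath n y x) (hγ : 0 ≤ γ) (hle : γ ≤ γ') (t : Fin n)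
    (hjump : x γ' t.succ ≠ x γ' t.castSucc) :
    sign (x γ t.succ - x γ t.castSucc) = sign (x γ' t.succ - x γ' t.castSucc) := by
  have := (hx.isKKT hγ).sign_fwdDiff_eq_of_le (hx.isKKT (hγ.trans hle)) hle t.isLt
    (by rw [fwdDiff_zeroExtend]; exact sub_ne_zero.2 hjump)
  simpa only [fwdDiff_zeroExtend] using this

theorem isAffineOn_Icc (hx : IsSolutionPath n y x) {p q : ℝ} (hp : 0 ≤ p) (hpq : p < q)
    (hsign : ∀ t : Fin n,
      sign (x p t.succ - x p t.castSucc) = sign (x q t.succ - x q t.castSucc)) :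
    IsAffineOn x (Icc p q) := by
  refine ⟨x p - p • (q - p)⁻¹ • (x q - x p), (q - p)⁻¹ • (x q - x p), fun γ hγ => ?_⟩
  have hqp : 0 < q - p := sub_pos.2 hpq
  have hγ_eq : (q - γ) / (q - p) * p + (γ - p) / (q - p) * q = γ := by field_simp; ring
  have hkkt := (hx.isKKT hp).convex_combination (hx.isKKT (hp.trans hpq.le))
    (fun t ht => by rw [fwdDiff_zeroExtend _ ⟨t, ht⟩, fwdDiff_zeroExtend _ ⟨t, ht⟩]; exact hsign _)
    (div_nonneg (sub_nonneg.2 hγ.2) hqp.le) (div_nonneg (sub_nonneg.2 hγ.1) hqp.le)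
    (by field_simp; ring)
  rw [hγ_eq] at hkkt
  funext i
  have hi := hkkt.eq_of_isMinimizer (isMinimizer_zeroExtend (hx γ (hp.trans hγ.1))) i.is_le
  simp only [zeroExtend_val, Pi.add_apply, Pi.sub_apply, Pi.smul_apply, smul_eq_mul] at hi ⊢
  rw [hi]
  field_simp
  ring

theorem sq_sub_le (hx : IsSolutionPath n y x) (hγ : 0 ≤ γ) (hγ' : 0 ≤ γ') (i : Fin (n + 1)) :
    (x γ i - x γ' i) ^ 2 ≤ |γ - γ'| * totalVar n (zeroExtend (x 0)) := by
  wlog hle : γ ≤ γ' generalizing γ γ'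
  · rw [← neg_sub, neg_sq, abs_sub_comm]
    exact this hγ' hγ (le_of_not_ge hle)
  have htv_nonneg : 0 ≤ totalVar n (zeroExtend (x γ')) := sum_nonneg fun _ _ => abs_nonneg _
  have htv_le : totalVar n (zeroExtend (x γ)) ≤ totalVar n (zeroExtend (x 0)) := by
    have h := ((hx.isKKT le_rfl).sqDist_le (hx.isKKT hγ)).trans' (sqDist_nonneg _ _)
    rcases hγ.eq_or_lt with rfl | hpos
    · exact le_rfl
    · linarith [(mul_nonneg_iff_of_pos_left (by linarith : 0 < γ - 0)).1 h]
  have hsq := (sq_sub_le_sqDist _ _ i.is_le).trans ((hx.isKKT hγ).sqDist_le (hx.isKKT hγ'))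
  simp only [zeroExtend_val] at hsq
  rw [abs_sub_comm, abs_of_nonneg (sub_nonneg.2 hle), ← neg_sub, neg_sq]
  exact hsq.trans (mul_le_mul_of_nonneg_left (by linarith) (sub_nonneg.2 hle))

theorem continuousOn (hx : IsSolutionPath n y x) : ContinuousOn x (Ici 0) := by
  set M := totalVar n (zeroExtend (x 0))
  have hM : 0 ≤ M := sum_nonneg fun _ _ => abs_nonneg _
  refine continuousOn_pi.2 fun i => Metric.continuousOn_iff.2 fun γ₀ h₀ ε hε =>
    ⟨ε ^ 2 / (M + 1), by positivity, fun γ hγ hdist => ?_⟩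
  rw [Real.dist_eq] at hdist ⊢
  refine abs_lt_of_sq_lt_sq ?_ hε.le
  calc (x γ i - x γ₀ i) ^ 2 ≤ |γ - γ₀| * M := hx.sq_sub_le hγ h₀ i
    _ ≤ ε ^ 2 / (M + 1) * M := by gcongr
    _ < ε ^ 2 := by
      rw [div_mul_eq_mul_div, div_lt_iff₀ (by positivity)]
      nlinarith [sq_pos_of_pos hε]

theorem isUpperSet_fusionSet (hx : IsSolutionPath n y x) (t : Fin n) :
    IsUpperSet (fusionSet x t) := by
  rintro γ γ' hle ⟨hγ, hfused⟩
  refine ⟨hγ.trans hle, by_contra fun hjump => hjump ?_⟩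
  have := hx.sign_jump_eq_of_le hγ hle t hjump
  rwa [hfused, sub_self, sign_zero, eq_comm, sign_eq_zero_iff, sub_eq_zero] at this

theorem sign_jump_eq_of_ordConnected (hx : IsSolutionPath n y x) {I : Set ℝ} (hI : I.OrdConnected)
    (hI₀ : I ⊆ Ici 0) (hbreak : ∀ c ∈ breakpoints x, c ∉ I) (hγ : γ ∈ I) (hγ' : γ' ∈ I)
    (t : Fin n) :
    sign (x γ t.succ - x γ t.castSucc) = sign (x γ' t.succ - x γ' t.castSucc) := by
  wlog hle : γ ≤ γ' generalizing γ γ'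
  · exact (this hγ' hγ (le_of_not_ge hle)).symm
  by_cases hfused : x γ' t.succ = x γ' t.castSucc
  · have hbdd : BddBelow (fusionSet x t) := ⟨0, fun _ h => h.1⟩
    have hmem : γ' ∈ fusionSet x t := ⟨hI₀ hγ', hfused⟩
    have hγmem : γ ∈ fusionSet x t := by
      by_contra hγnot
      exact hbreak _ (mem_insert_of_mem (mem_image_of_mem _ (mem_univ t))) (hI.out hγ hγ'
        ⟨(hx.isUpperSet_fusionSet t).le_csInf_of_notMem hbdd hγnot hmem, csInf_le hbdd hmem⟩)
    rw [hfused, hγmem.2, sub_self, sub_self]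
  · exact hx.sign_jump_eq_of_le (hI₀ hγ) hle t hfused

theorem isAffineOn_closure (hx : IsSolutionPath n y x) {I : Set ℝ} (hI : I.OrdConnected)
    (hI₀ : I ⊆ Ici 0) (hbreak : ∀ c ∈ breakpoints x, c ∉ I) : IsAffineOn x (closure I) :=
  (isAffineOn_of_forall_Icc hI fun _ hp _ hq hpq => hx.isAffineOn_Icc (hI₀ hp) hpq
    (hx.sign_jump_eq_of_ordConnected hI hI₀ hbreak hp hq)).closure
    (hx.continuousOn.mono (closure_minimal hI₀ isClosed_Ici))

end IsSolutionPath

end Paths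

end FusedLasso

/-- The solution path of the unweighted 1-D fused lasso with input of size `n+1` has
at most `n+1` distinct linear segments. -/
theorem fused_lasso_linear_segments (n : ℕ) (y : Fin (n + 1) → ℝ)
    (x : ℝ → Fin (n + 1) → ℝ)
    (hx : ∀ γ, 0 ≤ γ → ∀ v, fusedObj1 n y γ (x γ) ≤ fusedObj1 n y γ v) :
    ∃ (k : ℕ) (c : Fin (k + 1) → ℝ),
      k + 1 ≤ n + 1 ∧
      c 0 = 0 ∧ StrictMono c ∧
      (∀ i : Fin k, ∃ a b : Fin (n + 1) → ℝ,
        ∀ γ ∈ Set.Icc (c i.castSucc) (c i.succ), ∀ t, x γ t = a t + γ * b t) ∧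
      (∃ a b : Fin (n + 1) → ℝ,
        ∀ γ ∈ Set.Ici (c (Fin.last k)), ∀ t, x γ t = a t + γ * b t) := by
  obtain ⟨k, c, hcard, hc0, hmono, hc⟩ := (FusedLasso.breakpoints x).exists_strictMono_enum
    FusedLasso.zero_mem_breakpoints fun _ => FusedLasso.nonneg_of_mem_breakpoints
  have hc_nonneg : ∀ i, 0 ≤ c i := fun i => hc0 ▸ hmono.monotone (Fin.zero_le i)
  have haffine : ∀ I : Set ℝ, I.OrdConnected → I ⊆ Set.Ici 0 → (∀ j, c j ∉ I) →
      ∃ a b : Fin (n + 1) → ℝ, ∀ γ ∈ closure I, ∀ t, x γ t = a t + γ * b t := by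
    intro I hI hI₀ hcI
    obtain ⟨a, b, hab⟩ := FusedLasso.IsSolutionPath.isAffineOn_closure hx hI hI₀ fun s hs => by
      obtain ⟨j, rfl⟩ := hc s hs
      exact hcI j
    exact ⟨a, b, fun γ hγ t => by simp [hab γ hγ]⟩
  refine ⟨k, c, hcard ▸ FusedLasso.card_breakpoints_le, hc0, hmono, fun i => ?_, ?_⟩
  · have := haffine _ Set.ordConnected_Ioo
      (Set.Ioo_subset_Ioi_self.trans (Set.Ioi_subset_Ici (hc_nonneg _))) (hmono.apply_notMem_Ioo i)
    rwa [closure_Ioo (hmono Fin.castSucc_lt_succ).ne] at this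
  · have := haffine _ Set.ordConnected_Ioi (Set.Ioi_subset_Ici (hc_nonneg _))
      fun j hj => not_lt.2 (hmono.monotone (Fin.le_last j)) hj
    rwa [closure_Ioi] at this
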